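/- arXiv:2410.07534 — 3 statements merged into one kernel-verified Lean document; each statement's English description precedes it below -/
import Mathlib

section
/- For every real number u > 0 and every complex number s, the iterated sum ∑_{n=0}^∞ ∑_{k=0}^n (-1)^k * C(n,k) * (k+u+1)^(1-s) converges and equals u^(1-s). -/
/-!
Write `b_n(α, w) = ∑_{k ≤ n} (-1)^k C(n,k) (k + w)^α`. Pascal's rule gives the telescoping identity
`b_n(α, w + 1) = b_n(α, w) - b_{n+1}(α, w)`, so the `N`-th partial sum of the series is
`u^(1-s) - b_N(1 - s, u)`, and everything reduces to the decay `b_n(α, w) = O(n^(-c))` for every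
`0 < c < w`. For `Re α < 0` this comes from the Mellin representation
`Γ(-α) b_n(α, w) = ∫_0^∞ t^(-α-1) e^(-wt) (1 - e^(-t))^n dt` and the bound
`(1 - e^(-t))^n ≤ c^c n^(-c) e^(ct)`; the recurrence
`b_{n+1}(α, w) = w b_{n+1}(α - 1, w) - (n + 1) b_n(α - 1, w + 1)` then raises `Re α` one unit at a
time. With `w = u + 1 > 1` the decay gives absolute summability, with `w = u` it gives
`b_N(1 - s, u) → 0`.
-/

open Finset

section AltBinomSum

variable {R : Type*} [CommRing R]

/-- `(-1) ^ n` times the `n`-th forward difference of `f` at `0`. -/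
def altBinomSum (f : ℕ → R) (n : ℕ) : R :=
  ∑ k ∈ range (n + 1), (-1) ^ k * n.choose k * f k

theorem altBinomSum_zero (f : ℕ → R) : altBinomSum f 0 = f 0 := by
  simp [altBinomSum]

theorem altBinomSum_add (f g : ℕ → R) (n : ℕ) :
    altBinomSum (fun k => f k + g k) n = altBinomSum f n + altBinomSum g n := by
  simp only [altBinomSum, mul_add, sum_add_distrib]

theorem altBinomSum_const_mul (c : R) (f : ℕ → R) (n : ℕ) :
    altBinomSum (fun k => c * f k) n = c * altBinomSum f n := by
  simp only [altBinomSum, mul_sum]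
  exact sum_congr rfl fun k _ => by ring

theorem altBinomSum_succ (f : ℕ → R) (n : ℕ) :
    altBinomSum f (n + 1) = altBinomSum f n - altBinomSum (fun k => f (k + 1)) n := by
  have shifted : ∑ k ∈ range (n + 1), (-1) ^ (k + 1) * n.choose (k + 1) * f (k + 1) + f 0
      = altBinomSum f n := by
    rw [sum_range_succ, Nat.choose_succ_self, altBinomSum, sum_range_succ']
    simp
  rw [← shifted, altBinomSum, sum_range_succ', altBinomSum, sub_eq_add_neg, ← sum_neg_distrib]
  simp only [Nat.choose_succ_succ', Nat.choose_zero_right, Nat.cast_add, pow_succ]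
  simp only [mul_neg, mul_one, neg_mul, add_mul, mul_add, sum_add_distrib, sum_neg_distrib]
  ring

theorem altBinomSum_natCast_mul (f : ℕ → R) (n : ℕ) :
    altBinomSum (fun k => k * f k) (n + 1) = -(n + 1) * altBinomSum (fun k => f (k + 1)) n := by
  rw [altBinomSum, sum_range_succ', altBinomSum, mul_sum]
  simp only [Nat.cast_zero, zero_mul, mul_zero, add_zero]
  refine sum_congr rfl fun k _ => ?_
  have h := congrArg (Nat.cast : ℕ → R) (Nat.add_one_mul_choose_eq n k)
  push_cast at h ⊢
  linear_combination ((-1 : R) ^ k * f (k + 1)) * h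

end AltBinomSum

noncomputable def cpowDiff (α : ℂ) (w : ℝ) : ℕ → ℂ :=
  altBinomSum fun k => ((k + w : ℝ) : ℂ) ^ α

theorem cpowDiff_zero (α : ℂ) (w : ℝ) : cpowDiff α w 0 = (w : ℂ) ^ α := by
  simp [cpowDiff, altBinomSum_zero]

theorem cpowDiff_add_one (α : ℂ) (w : ℝ) (n : ℕ) :
    cpowDiff α (w + 1) n = cpowDiff α w n - cpowDiff α w (n + 1) := by
  rw [cpowDiff, cpowDiff, altBinomSum_succ, sub_sub_cancel]
  push_cast
  simp only [add_assoc, add_comm (1 : ℂ)]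

theorem cpowDiff_succ (α : ℂ) {w : ℝ} (hw : 0 < w) (n : ℕ) :
    cpowDiff α w (n + 1)
      = w * cpowDiff (α - 1) w (n + 1) - (n + 1) * cpowDiff (α - 1) (w + 1) n := by
  have split (k : ℕ) : ((k + w : ℝ) : ℂ) ^ α
      = w * ((k + w : ℝ) : ℂ) ^ (α - 1) + k * ((k + w : ℝ) : ℂ) ^ (α - 1) := by
    have hne : ((k + w : ℝ) : ℂ) ≠ 0 := Complex.ofReal_ne_zero.mpr (by positivity)
    rw [Complex.cpow_sub _ _ hne, Complex.cpow_one]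
    field_simp
    push_cast
    ring
  rw [cpowDiff, funext split, altBinomSum_add, altBinomSum_const_mul, altBinomSum_natCast_mul]
  simp only [cpowDiff, Nat.cast_succ, add_right_comm _ (1 : ℝ), add_assoc]
  ring

open MeasureTheory Set

theorem mellinConvergent_exp_neg_mul {s : ℂ} (hs : 0 < s.re) {x : ℝ} (hx : 0 < x) :
    MellinConvergent (fun t : ℝ => ((Real.exp (-(x * t)) : ℝ) : ℂ)) s := by
  refine (MellinConvergent.comp_mul_left (f := fun t => ((Real.exp (-t) : ℝ) : ℂ)) hx).mpr ?_
  refine (Complex.GammaIntegral_convergent hs).congr_fun (fun t _ => ?_) measurableSet_Ioi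
  simp [mul_comm]

theorem mellin_exp_neg_mul {s : ℂ} (hs : 0 < s.re) {x : ℝ} (hx : 0 < x) :
    mellin (fun t : ℝ => ((Real.exp (-(x * t)) : ℝ) : ℂ)) s
      = (x : ℂ) ^ (-s) * Complex.Gamma s := by
  rw [mellin_comp_mul_left (E := ℂ) (fun t => ((Real.exp (-t) : ℝ) : ℂ)) s hx,
    ← Complex.GammaIntegral_eq_mellin, ← Complex.Gamma_eq_integral hs, smul_eq_mul]

theorem mellin_finsetSum {E ι : Type*} [NormedAddCommGroup E] [NormedSpace ℂ E] (s : Finset ι)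
    (f : ι → ℝ → E) {z : ℂ} (hf : ∀ i ∈ s, MellinConvergent (f i) z) :
    mellin (fun t => ∑ i ∈ s, f i t) z = ∑ i ∈ s, mellin (f i) z := by
  simp only [mellin, smul_sum]
  exact integral_finsetSum s hf

theorem norm_mellin_le {E : Type*} [NormedAddCommGroup E] [NormedSpace ℂ E] (f : ℝ → E) (s : ℂ) :
    ‖mellin f s‖ ≤ ∫ t in Ioi 0, t ^ (s.re - 1) * ‖f t‖ := by
  refine (norm_integral_le_integral_norm _).trans_eq
    (setIntegral_congr_fun measurableSet_Ioi fun t ht => ?_)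
  simp [norm_smul, Complex.norm_cpow_eq_rpow_re_of_pos ht]

theorem exp_neg_mul_mul_one_sub_exp_neg_pow (w t : ℝ) (n : ℕ) :
    Real.exp (-(w * t)) * (1 - Real.exp (-t)) ^ n
      = ∑ k ∈ range (n + 1), (-1) ^ k * n.choose k * Real.exp (-((k + w) * t)) := by
  rw [sub_eq_neg_add, add_pow, mul_sum]
  refine sum_congr rfl fun k _ => ?_
  rw [neg_pow, ← Real.exp_nat_mul, show -((k + w) * t) = k * -t + -(w * t) by ring, Real.exp_add]
  ring

theorem cpowDiff_mul_Gamma {α : ℂ} (hα : α.re < 0) {w : ℝ} (hw : 0 < w) (n : ℕ) :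
    cpowDiff α w n * Complex.Gamma (-α)
      = mellin (fun t : ℝ => ((Real.exp (-(w * t)) * (1 - Real.exp (-t)) ^ n : ℝ) : ℂ)) (-α) := by
  have hs : 0 < (-α).re := by simpa using hα
  have term (k : ℕ) : ((k + w : ℝ) : ℂ) ^ α * Complex.Gamma (-α)
      = mellin (fun t : ℝ => ((Real.exp (-((k + w) * t)) : ℝ) : ℂ)) (-α) := by
    rw [mellin_exp_neg_mul hs (by positivity), neg_neg]
  calc cpowDiff α w n * Complex.Gamma (-α)
      = ∑ k ∈ range (n + 1),
          ((-1) ^ k * n.choose k : ℂ) * (((k + w : ℝ) : ℂ) ^ α * Complex.Gamma (-α)) := by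
        simp only [cpowDiff, altBinomSum, sum_mul, mul_assoc]
    _ = ∑ k ∈ range (n + 1), mellin (fun t : ℝ =>
          ((-1) ^ k * n.choose k : ℂ) • ((Real.exp (-((k + w) * t)) : ℝ) : ℂ)) (-α) :=
        sum_congr rfl fun k _ => by rw [term, mellin_const_smul, smul_eq_mul]
    _ = _ := by
        rw [← mellin_finsetSum]
        · congr 1
          funext t
          simp only [exp_neg_mul_mul_one_sub_exp_neg_pow, Complex.ofReal_sum, Complex.ofReal_mul,
            Complex.ofReal_pow, Complex.ofReal_neg, Complex.ofReal_one, Complex.ofReal_natCast,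
            smul_eq_mul]
        · intro k _
          exact (mellinConvergent_exp_neg_mul hs (by positivity)).const_smul _

theorem rpow_mul_exp_neg_le {z c : ℝ} (hz : 0 ≤ z) (hc : 0 < c) :
    z ^ c * Real.exp (-z) ≤ c ^ c := by
  have hlin : z ≤ c * Real.exp (z / c) := by
    have := Real.add_one_le_exp (z / c)
    rw [div_add_one hc.ne', div_le_iff₀ hc] at this
    nlinarith [Real.exp_pos (z / c)]
  have hpow : z ^ c ≤ c ^ c * Real.exp z := by
    calc z ^ c ≤ (c * Real.exp (z / c)) ^ c := Real.rpow_le_rpow hz hlin hc.le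
      _ = c ^ c * Real.exp z := by
        rw [Real.mul_rpow hc.le (Real.exp_pos _).le, ← Real.exp_mul, div_mul_cancel₀ _ hc.ne']
  calc z ^ c * Real.exp (-z) ≤ c ^ c * Real.exp z * Real.exp (-z) :=
        mul_le_mul_of_nonneg_right hpow (Real.exp_pos _).le
    _ = c ^ c := by rw [mul_assoc, ← Real.exp_add, add_neg_cancel, Real.exp_zero, mul_one]

theorem one_sub_pow_mul_rpow_le {y c : ℝ} (hy₀ : 0 ≤ y) (hy₁ : y ≤ 1) (hc : 0 < c) (n : ℕ) :
    (1 - y) ^ n * (n * y) ^ c ≤ c ^ c := by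
  have hexp : (1 - y) ^ n ≤ Real.exp (-(n * y)) := by
    calc (1 - y) ^ n ≤ Real.exp (-y) ^ n :=
          pow_le_pow_left₀ (by linarith) (Real.one_sub_le_exp_neg y) n
      _ = Real.exp (-(n * y)) := by rw [← Real.exp_nat_mul, mul_neg]
  calc (1 - y) ^ n * (n * y) ^ c ≤ Real.exp (-(n * y)) * (n * y) ^ c :=
        mul_le_mul_of_nonneg_right hexp (by positivity)
    _ ≤ c ^ c := by rw [mul_comm]; exact rpow_mul_exp_neg_le (by positivity) hc

theorem exp_neg_mul_mul_one_sub_exp_neg_pow_le {w c t : ℝ} (hc : 0 < c) (ht : 0 ≤ t) {n : ℕ}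
    (hn : 0 < n) :
    Real.exp (-(w * t)) * (1 - Real.exp (-t)) ^ n
      ≤ c ^ c * (n : ℝ) ^ (-c) * Real.exp (-((w - c) * t)) := by
  have hn' : (0 : ℝ) < n := by exact_mod_cast hn
  have key := one_sub_pow_mul_rpow_le (Real.exp_pos (-t)).le
    (Real.exp_le_one_iff.mpr (by linarith)) hc n
  rw [Real.mul_rpow hn'.le (Real.exp_pos _).le, ← Real.exp_mul] at key
  calc Real.exp (-(w * t)) * (1 - Real.exp (-t)) ^ n
      = Real.exp (-((w - c) * t)) * (n : ℝ) ^ (-c)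
          * ((1 - Real.exp (-t)) ^ n * ((n : ℝ) ^ c * Real.exp (-t * c))) := by
        rw [Real.rpow_neg hn'.le]
        field_simp
        rw [mul_assoc, ← Real.exp_add]
        ring_nf
    _ ≤ Real.exp (-((w - c) * t)) * (n : ℝ) ^ (-c) * c ^ c :=
        mul_le_mul_of_nonneg_left key (by positivity)
    _ = c ^ c * (n : ℝ) ^ (-c) * Real.exp (-((w - c) * t)) := by ring

open Filter Asymptotics

theorem integrableOn_rpow_mul_exp_neg_mul {q b : ℝ} (hq : -1 < q) (hb : 0 < b) :
    IntegrableOn (fun t : ℝ => t ^ q * Real.exp (-(b * t))) (Ioi 0) := by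
  simpa [Real.rpow_one] using integrableOn_rpow_mul_exp_neg_mul_rpow hq one_pos hb

theorem norm_cpowDiff_mul_norm_Gamma_le {α : ℂ} (hα : α.re < 0) {w c : ℝ} (hc : 0 < c)
    (hcw : c < w) {n : ℕ} (hn : 0 < n) :
    ‖cpowDiff α w n‖ * ‖Complex.Gamma (-α)‖
      ≤ c ^ c * (∫ t in Ioi 0, t ^ (-α.re - 1) * Real.exp (-((w - c) * t))) * (n : ℝ) ^ (-c) := by
  have hint := integrableOn_rpow_mul_exp_neg_mul (q := -α.re - 1) (by linarith) (sub_pos.mpr hcw)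
  calc ‖cpowDiff α w n‖ * ‖Complex.Gamma (-α)‖
      = ‖mellin (fun t : ℝ => ((Real.exp (-(w * t)) * (1 - Real.exp (-t)) ^ n : ℝ) : ℂ)) (-α)‖ := by
        rw [← norm_mul, cpowDiff_mul_Gamma hα (hc.trans hcw)]
    _ ≤ ∫ t in Ioi 0,
          t ^ ((-α).re - 1) * ‖((Real.exp (-(w * t)) * (1 - Real.exp (-t)) ^ n : ℝ) : ℂ)‖ :=
        norm_mellin_le _ _
    _ ≤ ∫ t in Ioi 0, c ^ c * (n : ℝ) ^ (-c) * (t ^ (-α.re - 1) * Real.exp (-((w - c) * t))) := by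
        refine integral_mono_of_nonneg
          (ae_restrict_of_forall_mem measurableSet_Ioi fun t ht => by
            have : (0 : ℝ) ≤ t := le_of_lt ht
            positivity)
          (hint.const_mul _) (ae_restrict_of_forall_mem measurableSet_Ioi fun t ht => ?_)
        have ht : (0 : ℝ) ≤ t := le_of_lt ht
        have hy : 0 ≤ 1 - Real.exp (-t) := by
          linarith [Real.exp_le_one_iff.mpr (neg_nonpos.mpr ht)]
        dsimp only
        rw [Complex.neg_re, Complex.norm_real, Real.norm_of_nonneg (by positivity)]
        calc t ^ (-α.re - 1) * (Real.exp (-(w * t)) * (1 - Real.exp (-t)) ^ n)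
            ≤ t ^ (-α.re - 1) * (c ^ c * (n : ℝ) ^ (-c) * Real.exp (-((w - c) * t))) :=
              mul_le_mul_of_nonneg_left (exp_neg_mul_mul_one_sub_exp_neg_pow_le hc ht hn)
                (by positivity)
          _ = _ := by ring
    _ = _ := by rw [integral_const_mul]; ring

theorem cpowDiff_isBigO_of_re_neg {α : ℂ} (hα : α.re < 0) {w c : ℝ} (hc : 0 < c) (hcw : c < w) :
    cpowDiff α w =O[atTop] fun n : ℕ => (n : ℝ) ^ (-c) := by
  have hΓ : 0 < ‖Complex.Gamma (-α)‖ :=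
    norm_pos_iff.mpr (Complex.Gamma_ne_zero_of_re_pos (by simpa using hα))
  refine IsBigO.of_bound (c ^ c * (∫ t in Ioi 0, t ^ (-α.re - 1) * Real.exp (-((w - c) * t)))
    / ‖Complex.Gamma (-α)‖) ?_
  filter_upwards [eventually_gt_atTop 0] with n hn
  rw [Real.norm_of_nonneg (by positivity), div_mul_eq_mul_div, le_div_iff₀ hΓ]
  exact norm_cpowDiff_mul_norm_Gamma_le hα hc hcw hn

theorem natCast_add_one_rpow_isTheta (a : ℝ) :
    (fun n : ℕ => ((n : ℝ) + 1) ^ a) =Θ[atTop] fun n : ℕ => (n : ℝ) ^ a := by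
  have hnorm : Tendsto (fun n : ℕ => ‖(n : ℝ)‖) atTop atTop :=
    tendsto_natCast_atTop_atTop.congr' (by simp)
  exact (IsEquivalent.refl.add_const_of_norm_tendsto_atTop hnorm).isTheta.rpow
    (Eventually.of_forall fun n => by positivity) (Eventually.of_forall fun n => by positivity)

theorem cpowDiff_isBigO_of_sub_one {α : ℂ} {w c : ℝ} (hw : 0 < w)
    (h₁ : cpowDiff (α - 1) w =O[atTop] fun n : ℕ => (n : ℝ) ^ (-c))
    (h₂ : cpowDiff (α - 1) (w + 1) =O[atTop] fun n : ℕ => (n : ℝ) ^ (-(c + 1))) :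
    cpowDiff α w =O[atTop] fun n : ℕ => (n : ℝ) ^ (-c) := by
  rw [← map_add_atTop_eq_nat 1, isBigO_map]
  have hrec : cpowDiff α w ∘ (· + 1) = fun n : ℕ =>
      w * cpowDiff (α - 1) w (n + 1) - (n + 1) * cpowDiff (α - 1) (w + 1) n :=
    funext (cpowDiff_succ α hw)
  rw [hrec]
  refine IsBigO.sub ((h₁.comp_tendsto (tendsto_add_atTop_nat 1)).const_mul_left _) ?_
  have hcast : (fun n : ℕ => (n + 1 : ℂ)) =O[atTop] fun n : ℕ => (n : ℝ) + 1 :=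
    isBigO_of_le _ fun n => by norm_cast
  calc (fun n : ℕ => (n + 1 : ℂ) * cpowDiff (α - 1) (w + 1) n)
      =O[atTop] fun n : ℕ => ((n : ℝ) + 1) * (n : ℝ) ^ (-(c + 1)) := hcast.mul h₂
    _ =O[atTop] fun n : ℕ => ((n : ℝ) + 1) * ((n : ℝ) + 1) ^ (-(c + 1)) :=
      (isBigO_refl _ _).mul (natCast_add_one_rpow_isTheta _).symm.isBigO
    _ = (fun n : ℕ => (n : ℝ) ^ (-c)) ∘ (· + 1) := by
      funext n
      rw [Function.comp_apply, Nat.cast_succ, mul_comm, ← Real.rpow_add_one (by positivity)]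
      ring_nf

theorem cpowDiff_isBigO (α : ℂ) {w c : ℝ} (hc : 0 < c) (hcw : c < w) :
    cpowDiff α w =O[atTop] fun n : ℕ => (n : ℝ) ^ (-c) := by
  obtain ⟨m, hm⟩ := exists_nat_gt α.re
  induction m generalizing α w c with
  | zero => exact cpowDiff_isBigO_of_re_neg (by exact_mod_cast hm) hc hcw
  | succ m ih =>
    have hre : (α - 1).re < m := by
      rw [Complex.sub_re, Complex.one_re]
      push_cast at hm
      linarith
    exact cpowDiff_isBigO_of_sub_one (hc.trans hcw) (ih (α - 1) hc hcw hre)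
      (ih (α - 1) (by linarith) (by linarith) hre)

theorem stmt_0 (u : ℝ) (hu : 0 < u) (s : ℂ) :
    HasSum (fun n : ℕ => ∑ k ∈ Finset.range (n + 1),
      (-1 : ℂ) ^ k * (n.choose k : ℂ) * ((k + u + 1 : ℝ) : ℂ) ^ (1 - s))
      (((u : ℝ) : ℂ) ^ (1 - s)) := by
  have hterm : (fun n : ℕ => ∑ k ∈ Finset.range (n + 1),
      (-1 : ℂ) ^ k * (n.choose k : ℂ) * ((k + u + 1 : ℝ) : ℂ) ^ (1 - s))
        = cpowDiff (1 - s) (u + 1) := by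
    funext n
    simp only [cpowDiff, altBinomSum, add_assoc]
  have hsummable : Summable (cpowDiff (1 - s) (u + 1)) :=
    summable_of_isBigO_nat (Real.summable_nat_rpow.mpr (by linarith : -(1 + u / 2) < -1))
      (cpowDiff_isBigO (1 - s) (by positivity) (by linarith))
  have hlim : Tendsto (cpowDiff (1 - s) u) atTop (nhds 0) :=
    (cpowDiff_isBigO (1 - s) (half_pos hu) (half_lt_self hu)).trans_tendsto
      ((tendsto_rpow_neg_atTop (half_pos hu)).comp tendsto_natCast_atTop_atTop)
  have hpartial (N : ℕ) : ∑ n ∈ range N, cpowDiff (1 - s) (u + 1) n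
      = cpowDiff (1 - s) u 0 - cpowDiff (1 - s) u N := by
    simp only [cpowDiff_add_one, sum_range_sub']
  rw [hterm, hsummable.hasSum_iff_tendsto_nat, ← cpowDiff_zero, ← sub_zero (cpowDiff _ _ 0)]
  simpa only [hpartial] using hlim.const_sub _
end

section
/- For every real u > 0 and every complex s with Re(s) > 1, the double sum ∑_{n=0}^∞ (1/(n+1)) ∑_{k=0}^n (-1)^k * C(n,k) * (k+u)^(1-s) converges and equals (s-1) * ζ(s,u), where ζ(s,u) is the Hurwitz zeta function. -/
/-!
Write `Γ(s) ζ(s,u)` as the Mellin transform at `s` of `e^{-ut} / (1 - e^{-t})`. Since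
`∑ₙ (1 - e^{-t})ⁿ / (n+1) = t / (1 - e^{-t})` (the series of `-log(1 - x) / x`), this is the
integral of `t^{s-2} ∑ₙ wₙ(t)` with `wₙ(t) = (1 - e^{-t})ⁿ e^{-ut} / (n+1)`. Expanding
`(1 - e^{-t})ⁿ` binomially, `∫ t^{s-2} wₙ(t) dt` is `Γ(s-1)` times the `n`-th term of Hasse's
series. The interchange of sum and integral is justified by `0 ≤ wₙ` and
`t / (1 - e^{-t}) ≤ 1 + t`, and `Γ(s) = (s-1) Γ(s-1)` finishes the proof.
-/

/-- The Hurwitz zeta function `ζ(s,u) = ∑_{m≥0} (m+u)^{-s}` (for `Re s > 1`, `u > 0`). -/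
noncomputable def hurwitzZetaSum (s : ℂ) (u : ℝ) : ℂ :=
  ∑' m : ℕ, ((m + u : ℝ) : ℂ) ^ (-s)

open Real Set MeasureTheory

lemma integrableOn_cpow_mul_exp_neg_mul_Ioi {a : ℂ} (ha : 0 < a.re) {r : ℝ} (hr : 0 < r) :
    IntegrableOn (fun t : ℝ => (t : ℂ) ^ (a - 1) * Complex.exp (-(r * t))) (Ioi 0) := by
  have hΓ := Complex.GammaIntegral_convergent ha
  rw [← mul_zero r, ← integrableOn_Ioi_comp_mul_left_iff _ _ hr] at hΓ
  refine IntegrableOn.congr_fun (hΓ.const_mul ((r : ℂ) ^ (a - 1))⁻¹) (fun t (ht : 0 < t) => ?_)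
    measurableSet_Ioi
  have hr' : (r : ℂ) ^ (a - 1) ≠ 0 := by simp [Complex.cpow_eq_zero_iff, hr.ne']
  simp only [Complex.ofReal_mul, Complex.ofReal_exp, Complex.ofReal_neg]
  rw [Complex.mul_cpow_ofReal_nonneg hr.le ht.le]
  field_simp

lemma exp_neg_lt_one {t : ℝ} (ht : 0 < t) : rexp (-t) < 1 :=
  exp_lt_one_iff.mpr (neg_neg_of_pos ht)

lemma hasSum_one_sub_exp_neg_pow_div_succ {t : ℝ} (ht : 0 < t) :
    HasSum (fun n : ℕ => (1 - rexp (-t)) ^ n / (n + 1)) (t / (1 - rexp (-t))) := by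
  set x := 1 - rexp (-t)
  have hx : 0 < x := sub_pos.mpr (exp_neg_lt_one ht)
  have hlog := hasSum_pow_div_log_of_abs_lt_one (x := x)
    (by rw [abs_of_pos hx]; exact sub_lt_self 1 (exp_pos _))
  rw [show 1 - x = rexp (-t) by ring, log_exp, neg_neg] at hlog
  refine (hlog.div_const x).congr_fun fun n => ?_
  rw [pow_succ]
  field_simp

lemma div_one_sub_exp_neg_le {t : ℝ} (ht : 0 < t) : t / (1 - rexp (-t)) ≤ 1 + t := by
  rw [div_le_iff₀ (sub_pos.mpr (exp_neg_lt_one ht))]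
  have h1 : rexp (-t) * rexp t = 1 := by rw [← exp_add]; simp
  nlinarith [add_one_le_exp t, exp_pos (-t)]

noncomputable def hasseWeight (u t : ℝ) (n : ℕ) : ℝ :=
  (1 - rexp (-t)) ^ n / (n + 1) * rexp (-(u * t))

noncomputable def hasseTerm (s : ℂ) (u : ℝ) (n : ℕ) : ℂ :=
  1 / ((n : ℂ) + 1) * ∑ k ∈ Finset.range (n + 1),
    (-1 : ℂ) ^ k * (n.choose k : ℂ) * ((k + u : ℝ) : ℂ) ^ (1 - s)

lemma hasseWeight_nonneg (u : ℝ) {t : ℝ} (ht : 0 ≤ t) (n : ℕ) : 0 ≤ hasseWeight u t n := by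
  have h : 0 ≤ 1 - rexp (-t) := sub_nonneg.mpr (exp_le_one_iff.mpr (neg_nonpos.mpr ht))
  unfold hasseWeight
  positivity

lemma hasSum_hasseWeight (u : ℝ) {t : ℝ} (ht : 0 < t) :
    HasSum (hasseWeight u t) (t / (1 - rexp (-t)) * rexp (-(u * t))) :=
  (hasSum_one_sub_exp_neg_pow_div_succ ht).mul_right _

lemma hasseWeight_eq_sum (u t : ℝ) (n : ℕ) :
    hasseWeight u t n =
      ∑ k ∈ Finset.range (n + 1), (-1) ^ k * n.choose k / (n + 1) * rexp (-((k + u) * t)) := by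
  have hexp (k : ℕ) : rexp (-((k + u) * t)) = rexp (-t) ^ k * rexp (-(u * t)) := by
    rw [← exp_nat_mul, ← exp_add]; ring_nf
  rw [hasseWeight, sub_eq_neg_add, add_pow, Finset.sum_div, Finset.sum_mul]
  refine Finset.sum_congr rfl fun k _ => ?_
  rw [hexp, neg_pow]
  ring

lemma cpow_mul_hasseWeight_eq_sum (u : ℝ) (s : ℂ) (n : ℕ) (t : ℝ) :
    (t : ℂ) ^ (s - 2) * hasseWeight u t n =
      ∑ k ∈ Finset.range (n + 1), ((-1) ^ k * n.choose k / (n + 1) : ℂ) *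
        ((t : ℂ) ^ (s - 1 - 1) * Complex.exp (-(((k + u : ℝ) : ℂ) * t))) := by
  rw [hasseWeight_eq_sum, Complex.ofReal_sum, Finset.mul_sum, show s - 1 - 1 = s - 2 by ring]
  refine Finset.sum_congr rfl fun k _ => ?_
  push_cast
  ring

section HasseSeries

variable {u : ℝ} {s : ℂ}

lemma integrableOn_cpow_mul_hasseWeight (hu : 0 < u) (hs : 1 < s.re) (n : ℕ) :
    IntegrableOn (fun t : ℝ => (t : ℂ) ^ (s - 2) * hasseWeight u t n) (Ioi 0) := by
  simp_rw [cpow_mul_hasseWeight_eq_sum]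
  exact integrable_finsetSum _ fun k _ =>
    (integrableOn_cpow_mul_exp_neg_mul_Ioi (by simpa using hs) (by positivity)).const_mul _

lemma integral_cpow_mul_hasseWeight (hu : 0 < u) (hs : 1 < s.re) (n : ℕ) :
    ∫ t in Ioi (0 : ℝ), (t : ℂ) ^ (s - 2) * hasseWeight u t n =
      Complex.Gamma (s - 1) * hasseTerm s u n := by
  simp_rw [cpow_mul_hasseWeight_eq_sum]
  rw [integral_finsetSum _ fun k _ =>
    (integrableOn_cpow_mul_exp_neg_mul_Ioi (by simpa using hs) (by positivity)).const_mul _]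
  rw [hasseTerm, Finset.mul_sum, Finset.mul_sum]
  refine Finset.sum_congr rfl fun k _ => ?_
  have hk : 0 < (k : ℝ) + u := by positivity
  rw [integral_const_mul, Complex.integral_cpow_mul_exp_neg_mul_Ioi (by simpa using hs) hk, one_div,
    Complex.inv_cpow _ _ (by rw [Complex.arg_ofReal_of_nonneg hk.le]; exact pi_ne_zero.symm),
    ← Complex.cpow_neg, neg_sub]
  push_cast
  ring

lemma norm_cpow_mul_hasseWeight {t : ℝ} (ht : 0 < t) (n : ℕ) :
    ‖(t : ℂ) ^ (s - 2) * hasseWeight u t n‖ = t ^ (s.re - 2) * hasseWeight u t n := by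
  rw [norm_mul, Complex.norm_cpow_eq_rpow_re_of_pos ht, Complex.norm_real, Real.norm_eq_abs,
    abs_of_nonneg (hasseWeight_nonneg u ht.le n)]
  simp

lemma summable_integral_norm_cpow_mul_hasseWeight (hu : 0 < u) (hs : 1 < s.re) :
    Summable fun n : ℕ => ∫ t in Ioi (0 : ℝ), ‖(t : ℂ) ^ (s - 2) * hasseWeight u t n‖ := by
  have hbound : IntegrableOn (fun t : ℝ => t ^ (s.re - 2) * rexp (-u * t) +
      t ^ (s.re - 1) * rexp (-u * t)) (Ioi 0) := by
    have h1 := integrableOn_rpow_mul_exp_neg_mul_rpow (s := s.re - 2) (by linarith) one_pos hu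
    have h2 := integrableOn_rpow_mul_exp_neg_mul_rpow (s := s.re - 1) (by linarith) one_pos hu
    simp only [rpow_one] at h1 h2
    exact h1.add h2
  have hint (n : ℕ) := (integrableOn_cpow_mul_hasseWeight hu hs n).norm
  refine summable_of_sum_range_le (c := ∫ t in Ioi (0 : ℝ),
      t ^ (s.re - 2) * rexp (-u * t) + t ^ (s.re - 1) * rexp (-u * t))
    (fun n => integral_nonneg fun t => norm_nonneg _) fun N => ?_
  rw [← integral_finsetSum _ fun n _ => hint n]
  refine setIntegral_mono_on (integrable_finsetSum _ fun n _ => hint n) hbound measurableSet_Ioi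
    fun t (ht : 0 < t) => ?_
  simp_rw [norm_cpow_mul_hasseWeight ht, ← Finset.mul_sum]
  calc t ^ (s.re - 2) * ∑ n ∈ Finset.range N, hasseWeight u t n
      ≤ t ^ (s.re - 2) * ((1 + t) * rexp (-(u * t))) := by
        gcongr
        exact (sum_le_hasSum _ (fun n _ => hasseWeight_nonneg u ht.le n)
          (hasSum_hasseWeight u ht)).trans (by gcongr; exact div_one_sub_exp_neg_le ht)
    _ = _ := by
        rw [show s.re - 1 = s.re - 2 + 1 by ring, rpow_add_one ht.ne', neg_mul]
        ring

lemma mellin_exp_neg_mul_div_one_sub_exp_neg (hu : 0 < u) (hs : 1 < s.re) :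
    mellin (fun t : ℝ => ((rexp (-(u * t)) / (1 - rexp (-t)) : ℝ) : ℂ)) s =
      Complex.Gamma s * hurwitzZetaSum s u := by
  have hgeom (t : ℝ) (ht : t ∈ Ioi 0) : HasSum (fun m : ℕ => (1 : ℂ) * rexp (-(m + u) * t))
      ((rexp (-(u * t)) / (1 - rexp (-t)) : ℝ) : ℂ) := by
    have h := (hasSum_geometric_of_lt_one (exp_nonneg _) (exp_neg_lt_one ht)).mul_left
      (rexp (-(u * t)))
    refine (Complex.hasSum_ofReal.mpr h).congr_fun fun m => ?_
    rw [one_mul, ← exp_nat_mul, ← exp_add]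
    ring_nf
  have hsum : Summable fun m : ℕ => ‖(1 : ℂ)‖ / (m + u) ^ s.re := by
    refine ((summable_one_div_nat_add_rpow u s.re).mpr hs).congr fun m => ?_
    rw [abs_of_pos (by positivity), norm_one]
  rw [← (hasSum_mellin (fun m => Or.inr (by positivity)) (by linarith) hgeom hsum).tsum_eq,
    hurwitzZetaSum, ← tsum_mul_left]
  simp_rw [mul_one, div_eq_mul_inv, Complex.cpow_neg]

lemma hasSum_Gamma_mul_hasseTerm (hu : 0 < u) (hs : 1 < s.re) :
    HasSum (fun n => Complex.Gamma (s - 1) * hasseTerm s u n)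
      (Complex.Gamma s * hurwitzZetaSum s u) := by
  have h := hasSum_integral_of_summable_integral_norm (integrableOn_cpow_mul_hasseWeight hu hs)
    (summable_integral_norm_cpow_mul_hasseWeight hu hs)
  simp_rw [integral_cpow_mul_hasseWeight hu hs] at h
  suffices hI : ∫ t in Ioi (0 : ℝ), ∑' n, (t : ℂ) ^ (s - 2) * hasseWeight u t n =
      Complex.Gamma s * hurwitzZetaSum s u by rwa [hI] at h
  rw [← mellin_exp_neg_mul_div_one_sub_exp_neg hu hs, mellin]
  refine setIntegral_congr_fun measurableSet_Ioi fun t (ht : 0 < t) => ?_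
  have ht' : (t : ℂ) ≠ 0 := Complex.ofReal_ne_zero.mpr ht.ne'
  have hden : 1 - rexp (-t) ≠ 0 := (sub_pos.mpr (exp_neg_lt_one ht)).ne'
  rw [tsum_mul_left, ← Complex.ofReal_tsum, (hasSum_hasseWeight u ht).tsum_eq,
    show s - 1 = s - 2 + 1 by ring, Complex.cpow_add _ _ ht', Complex.cpow_one, smul_eq_mul]
  push_cast
  field_simp

end HasseSeries

theorem stmt_1 (u : ℝ) (hu : 0 < u) (s : ℂ) (hs : 1 < s.re) :
    HasSum (fun n : ℕ => (1 / ((n : ℂ) + 1)) * ∑ k ∈ Finset.range (n + 1),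
      (-1 : ℂ) ^ k * (n.choose k : ℂ) * ((k + u : ℝ) : ℂ) ^ (1 - s))
      ((s - 1) * hurwitzZetaSum s u) := by
  have hs1 : 0 < (s - 1).re := by simpa using hs
  have hΓ : Complex.Gamma s = (s - 1) * Complex.Gamma (s - 1) := by
    simpa using Complex.Gamma_add_one (s - 1) (fun h => by simp [h] at hs1)
  have h := hasSum_Gamma_mul_hasseTerm hu hs
  rw [hΓ, mul_assoc, mul_left_comm] at h
  exact (hasSum_mul_left_iff (Complex.Gamma_ne_zero_of_re_pos hs1)).mp h
end

section
/- Define t_n(u) = ∏_{k=0}^n (k+u)^((-1)^{k+1} C(n,k)) for real u > 0. Then ∑_{n=1}^∞ (1/n) log(t_n(u)) converges and equals 1/u; equivalently, ∏_{n=1}^∞ t_n(u)^{1/n} = e^{1/u}. -/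
/-!
Write `F_n(x) = ∑_{k ≤ n} (-1)^k C(n,k) log (x + k)`. By partial fractions
`F_n'(x) = n! / (x (x+1) ⋯ (x+n))`, and `F_n(x) → 0` as `x → ∞` when `n ≥ 1` because the
coefficients sum to zero. Hence the `n`-th term of the series is
`∫_u^∞ n! / (x (x+1) ⋯ (x+n+1)) dx`. These integrands telescope:
`n! / (x ⋯ (x+n+1)) = (D_n(x) - D_{n+1}(x)) / x` with `D_n(x) = n! / (x ⋯ (x+n))`, and
`D_n(x) = Γ_n(x) / n^x → 0` by Euler's limit formula `Γ_n(x) → Γ(x)`. So they sum to `1 / x²`,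
and summing under the integral sign gives `∫_u^∞ dx / x² = 1 / u`.
-/

open Real Finset Filter MeasureTheory Topology
open scoped Nat

section AlternatingBinomialSum

variable {R : Type*} [CommRing R]

def alternatingBinomialSum (n : ℕ) (f : ℕ → R) : R :=
  ∑ k ∈ range (n + 1), (-1) ^ k * n.choose k * f k

theorem alternatingBinomialSum_succ (n : ℕ) (f : ℕ → R) :
    alternatingBinomialSum (n + 1) f =
      alternatingBinomialSum n f - alternatingBinomialSum n (fun k => f (k + 1)) := by
  have h := sum_choose_succ_mul (R := R) (fun k _ => (-1) ^ k * f k) n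
  simp only [alternatingBinomialSum, sub_eq_add_neg, ← sum_neg_distrib]
  ring_nf at h ⊢
  exact h

theorem alternatingBinomialSum_const {n : ℕ} (hn : n ≠ 0) (c : R) :
    alternatingBinomialSum n (fun _ => c) = 0 := by
  obtain ⟨n, rfl⟩ := Nat.exists_eq_succ_of_ne_zero hn
  rw [alternatingBinomialSum_succ, sub_self]

theorem alternatingBinomialSum_sub (n : ℕ) (f g : ℕ → R) :
    alternatingBinomialSum n (fun k => f k - g k) =
      alternatingBinomialSum n f - alternatingBinomialSum n g := by
  simp only [alternatingBinomialSum, mul_sub, sum_sub_distrib]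

end AlternatingBinomialSum

theorem alternatingBinomialSum_inv_add {K : Type*} [Field K] (n : ℕ) {x : K}
    (hx : ∀ j : ℕ, x + j ≠ 0) :
    alternatingBinomialSum n (fun k => (x + k)⁻¹) = n ! / ∏ j ∈ range (n + 1), (x + j) := by
  induction n generalizing x with
  | zero => simp [alternatingBinomialSum]
  | succ n ih =>
    have hx' (j : ℕ) : x + 1 + j ≠ 0 := by
      simpa [add_assoc, add_comm (1 : K)] using hx (j + 1)
    have hshift : (fun k : ℕ => (x + (k + 1 : ℕ))⁻¹) = fun k : ℕ => (x + 1 + (k : K))⁻¹ := by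
      funext k; push_cast; ring
    have hlast : ∏ j ∈ range (n + 2), (x + j) =
        (∏ j ∈ range (n + 1), (x + j)) * (x + (n + 1)) := by
      rw [prod_range_succ]; push_cast; rfl
    have hfirst : ∏ j ∈ range (n + 2), (x + j) = x * ∏ j ∈ range (n + 1), (x + 1 + j) := by
      rw [prod_range_succ']; simp [add_assoc, add_comm (1 : K), mul_comm]
    have hx0 : x ≠ 0 := by simpa using hx 0
    have hxn : x + (n + 1) ≠ 0 := by exact_mod_cast hx (n + 1)
    have hP : ∏ j ∈ range (n + 1), (x + j) ≠ 0 := prod_ne_zero_iff.2 fun j _ => hx j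
    have hP' : ∏ j ∈ range (n + 1), (x + 1 + j) ≠ 0 := prod_ne_zero_iff.2 fun j _ => hx' j
    rw [alternatingBinomialSum_succ, hshift, ih hx, ih hx', hlast, Nat.factorial_succ]
    rw [hfirst] at hlast
    push_cast
    field_simp
    linear_combination (n ! : K) * hlast

theorem hasDerivAt_alternatingBinomialSum_log (n : ℕ) {x : ℝ} (hx : 0 < x) :
    HasDerivAt (fun y => alternatingBinomialSum n (fun k => log (y + k)))
      (n ! / ∏ j ∈ range (n + 1), (x + j)) x := by
  have hxk (k : ℕ) : x + k ≠ 0 := by positivity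
  rw [← alternatingBinomialSum_inv_add n hxk]
  unfold alternatingBinomialSum
  refine HasDerivAt.fun_sum fun k _ => HasDerivAt.const_mul _ ?_
  simpa using ((hasDerivAt_id x).add_const (k : ℝ)).log (hxk k)

theorem tendsto_alternatingBinomialSum_log_atTop {n : ℕ} (hn : n ≠ 0) :
    Tendsto (fun x => alternatingBinomialSum n (fun k => log (x + k))) atTop (𝓝 0) := by
  have h (x : ℝ) : alternatingBinomialSum n (fun k => log (x + k)) =
      alternatingBinomialSum n (fun k => log (x + k) - log x) := by
    rw [alternatingBinomialSum_sub, alternatingBinomialSum_const hn, sub_zero]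
  simp only [h]
  simpa [alternatingBinomialSum] using tendsto_finsetSum (range (n + 1)) fun k _ =>
    (tendsto_log_comp_add_sub_log (k : ℝ)).const_mul ((-1) ^ k * n.choose k : ℝ)

theorem integral_Ioi_factorial_div_prod {n : ℕ} (hn : n ≠ 0) {u : ℝ} (hu : 0 < u) :
    ∫ x in Set.Ioi u, n ! / ∏ j ∈ range (n + 1), (x + j) =
      -alternatingBinomialSum n (fun k => log (u + k)) := by
  rw [integral_Ioi_of_hasDerivAt_of_nonneg'
    (fun x hx => hasDerivAt_alternatingBinomialSum_log n (hu.trans_le hx))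
    (fun x hx => by have := hu.trans hx; positivity) (tendsto_alternatingBinomialSum_log_atTop hn),
    zero_sub]

theorem tendsto_factorial_div_prod_atTop {x : ℝ} (hx : 0 < x) :
    Tendsto (fun n : ℕ => n ! / ∏ j ∈ range (n + 1), (x + j)) atTop (𝓝 0) := by
  have h : Tendsto (fun n : ℕ => GammaSeq x n / (n : ℝ) ^ x) atTop (𝓝 0) :=
    (GammaSeq_tendsto_Gamma x).div_atTop
      ((tendsto_rpow_atTop hx).comp tendsto_natCast_atTop_atTop)
  refine h.congr' ((eventually_ne_atTop 0).mono fun n hn => ?_)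
  have : (n : ℝ) ^ x ≠ 0 := by positivity
  rw [GammaSeq, mul_div_assoc, mul_div_cancel_left₀ _ this]

theorem hasSum_factorial_div_prod {x : ℝ} (hx : 0 < x) :
    HasSum (fun n : ℕ => n ! / ∏ j ∈ range (n + 2), (x + j)) (x ^ (-2 : ℝ)) := by
  set D : ℕ → ℝ := fun n => n ! / ∏ j ∈ range (n + 1), (x + j)
  have hterm (n : ℕ) : n ! / ∏ j ∈ range (n + 2), (x + j) = (D n - D (n + 1)) / x := by
    have hP : ∏ j ∈ range (n + 1), (x + j) ≠ 0 := by positivity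
    have hxn : x + (n + 1) ≠ 0 := by positivity
    simp only [D, prod_range_succ _ (n + 1), Nat.factorial_succ]
    push_cast
    field_simp
    ring
  rw [hasSum_iff_tendsto_nat_of_nonneg (fun n => by positivity)]
  simp only [hterm, ← sum_div, sum_range_sub']
  have hD0 : D 0 = x⁻¹ := by simp [D]
  rw [hD0, rpow_neg hx.le, rpow_two, sq, mul_inv, ← div_eq_mul_inv]
  simpa using ((tendsto_factorial_div_prod_atTop hx).const_sub x⁻¹).div_const x

theorem hasSum_integral_of_nonneg {α : Type*} [MeasurableSpace α] {μ : Measure α}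
    {F : ℕ → α → ℝ} {f : α → ℝ} (hF_meas : ∀ n, AEStronglyMeasurable (F n) μ)
    (hF_nonneg : ∀ n, 0 ≤ᵐ[μ] F n) (hf : Integrable f μ)
    (h_lim : ∀ᵐ a ∂μ, HasSum (fun n => F n a) (f a)) :
    HasSum (fun n => ∫ a, F n a ∂μ) (∫ a, f a ∂μ) :=
  hasSum_integral_of_dominated_convergence F hF_meas
    (fun n => (hF_nonneg n).mono fun _ ha => (Real.norm_of_nonneg ha).le)
    (h_lim.mono fun _ ha => ha.summable) (hf.congr (h_lim.mono fun _ ha => ha.tsum_eq.symm))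
    h_lim

theorem stmt_13 (u : ℝ) (hu : 0 < u) :
    HasSum (fun n : ℕ => (1 / ((n : ℝ) + 1)) * ∑ k ∈ Finset.range (n + 2),
        (-1 : ℝ) ^ (k + 1) * ((n + 1).choose k : ℝ) * Real.log (k + u))
      (1 / u) := by
  have hterm (n : ℕ) : (1 / ((n : ℝ) + 1)) * ∑ k ∈ Finset.range (n + 2),
      (-1 : ℝ) ^ (k + 1) * ((n + 1).choose k : ℝ) * Real.log (k + u) =
      ∫ x in Set.Ioi u, n ! / ∏ j ∈ range (n + 2), (x + j) := by
    have hfac (x : ℝ) : n ! / ∏ j ∈ range (n + 2), (x + j) =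
        1 / ((n : ℝ) + 1) * ((n + 1) ! / ∏ j ∈ range (n + 1 + 1), (x + j)) := by
      rw [Nat.factorial_succ]; push_cast; field_simp
    rw [funext hfac, integral_const_mul, integral_Ioi_factorial_div_prod n.succ_ne_zero hu,
      alternatingBinomialSum, ← sum_neg_distrib]
    congr 1
    refine sum_congr rfl fun k _ => ?_
    rw [add_comm u]
    ring
  have h := hasSum_integral_of_nonneg (μ := volume.restrict (Set.Ioi u))
    (fun _ => (by fun_prop : Measurable _).aestronglyMeasurable)
    (fun _ => (ae_restrict_mem measurableSet_Ioi).mono fun x (hx : u < x) => by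
      have := hu.trans hx; positivity)
    (integrableOn_Ioi_rpow_of_lt (by norm_num) hu)
    ((ae_restrict_mem measurableSet_Ioi).mono fun x (hx : u < x) =>
      hasSum_factorial_div_prod (hu.trans hx))
  rw [integral_Ioi_rpow_of_lt (by norm_num) hu] at h
  convert h using 1
  · exact funext hterm
  · norm_num [rpow_neg_one]
end
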